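/- arXiv:1510.06603 — 3 statements merged into one kernel-verified Lean document; each statement's English description precedes it below -/
import Mathlib

section
/- Any arrival time in the feasible interval is achievable: with t̲[i] and t̄[i] the earliest and latest feasible arrival times at node i (as computed by forward and backward propagation with speed bound v_max), for every i and every τ ∈ [t̲[i], t̄[i]] there exists a speed sequence v with 0 < v[j] ≤ v_max such that the truck arrives at node i exactly at time τ and still arrives at the destination by t^D. -/
open Finset

/-- Any arrival time in the feasible interval is achievable: with `t̲` and `t̄` the earliest
and latest feasible arrival times at the nodes `0, …, m` (computed by forward respectively
backward propagation at speed `v_max`), and assuming feasibility (`t̲[i] ≤ t̄[i]` for all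
nodes and `t^S ≤ t^D`), for every node `i` and every `τ ∈ [t̲[i], t̄[i]]` there is a speed
sequence `v` with `0 < v j ≤ v_max` under which the truck arrives at node `i` exactly at
time `τ` and still reaches the destination by the deadline `t^D`. -/
theorem interval_arrival_achievable (m : ℕ) (W : ℕ → ℝ) (hW : ∀ j, j < m → 0 < W j)
    (vmax tS tD : ℝ) (hv : 0 < vmax) (hSD : tS ≤ tD)
    (tlo tbar : ℕ → ℝ)
    (hlo : ∀ i, tlo i = tS + ∑ j ∈ Finset.range i, W j / vmax)
    (hbar0 : tbar 0 = tS)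
    (hbar : ∀ i, 1 ≤ i → tbar i = tD - ∑ j ∈ Finset.Ico i m, W j / vmax)
    (hfeas : ∀ i, i ≤ m → tlo i ≤ tbar i)
    (i : ℕ) (him : i ≤ m) (τ : ℝ) (hτ : τ ∈ Set.Icc (tlo i) (tbar i)) :
    ∃ v : ℕ → ℝ, (∀ j, j < m → 0 < v j ∧ v j ≤ vmax) ∧
      tS + ∑ j ∈ Finset.range i, W j / v j = τ ∧
      tS + ∑ j ∈ Finset.range m, W j / v j ≤ tD := by
  obtain ⟨hτ1, hτ2⟩ := hτ
  rcases Nat.eq_zero_or_pos i with hi0 | hi1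
  · -- i = 0 : τ = tS, use constant speed vmax
    subst hi0
    have hτS : τ = tS := le_antisymm (by simpa [hbar0] using hτ2)
      (by simpa [hlo 0] using hτ1)
    refine ⟨fun _ => vmax, fun j _ => ⟨hv, le_refl _⟩, by simp [hτS], ?_⟩
    rcases Nat.eq_zero_or_pos m with hm0 | hm1
    · simp [hm0, hSD]
    · have := hfeas m le_rfl
      rw [hlo m, hbar m hm1] at this
      simpa using this
  · -- i ≥ 1 : slow down uniformly on the first i edges
    set S : ℝ := ∑ j ∈ Finset.range i, W j / vmax with hS
    have hSpos : 0 < S := by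
      apply Finset.sum_pos
      · intro j hj
        exact div_pos (hW j (lt_of_lt_of_le (Finset.mem_range.mp hj) him)) hv
      · exact Finset.nonempty_range_iff.mpr (by omega)
    have hτS : S ≤ τ - tS := by
      have := hτ1
      rw [hlo i] at this
      linarith
    set c : ℝ := (τ - tS) / S with hc
    have hc1 : 1 ≤ c := (one_le_div hSpos).mpr hτS
    have hcpos : 0 < c := lt_of_lt_of_le one_pos hc1
    refine ⟨fun j => if j < i then vmax / c else vmax, ?_, ?_, ?_⟩
    · intro j _
      by_cases h : j < i <;> simp only [h, if_true, if_false]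
      · exact ⟨div_pos hv hcpos, div_le_self hv.le hc1⟩
      · exact ⟨hv, le_refl _⟩
    · have hsum : ∑ j ∈ Finset.range i, W j / (if j < i then vmax / c else vmax)
          = c * S := by
        rw [hS, Finset.mul_sum]
        apply Finset.sum_congr rfl
        intro j hj
        rw [if_pos (Finset.mem_range.mp hj)]
        field_simp
      rw [hsum, hc, div_mul_cancel₀ _ (ne_of_gt hSpos)]
      ring
    · have hsplit : Finset.range m = Finset.range i ∪ Finset.Ico i m := by
        simp only [Finset.range_eq_Ico]
        exact (Finset.Ico_union_Ico_eq_Ico (Nat.zero_le i) him).symm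
      rw [hsplit, Finset.sum_union (by
        rw [Finset.range_eq_Ico]
        exact Finset.Ico_disjoint_Ico_consecutive 0 i m)]
      have hsum1 : ∑ j ∈ Finset.range i, W j / (if j < i then vmax / c else vmax)
          = τ - tS := by
        have hsum : ∑ j ∈ Finset.range i, W j / (if j < i then vmax / c else vmax)
            = c * S := by
          rw [hS, Finset.mul_sum]
          apply Finset.sum_congr rfl
          intro j hj
          rw [if_pos (Finset.mem_range.mp hj)]
          field_simp
        rw [hsum, hc, div_mul_cancel₀ _ (ne_of_gt hSpos)]
      have hsum2 : ∑ j ∈ Finset.Ico i m, W j / (if j < i then vmax / c else vmax)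
          = ∑ j ∈ Finset.Ico i m, W j / vmax := by
        apply Finset.sum_congr rfl
        intro j hj
        rw [if_neg (by simpa using (Finset.mem_Ico.mp hj).1)]
      rw [hsum1, hsum2]
      have := hτ2
      rw [hbar i hi1] at this
      linarith
end

section
/- Two trucks can meet at a common node j (truck 1 at node index j of its path, truck 2 at node index j_l of its path, with the node being the same) under speed and deadline constraints if and only if the intervals [t̲₁[j], t̄₁[j]] and [t̲₂[j_l], t̄₂[j_l]] of feasible arrival times intersect. -/
open Finset

lemma truck_mem (m : ℕ) (W : ℕ → ℝ) (hW : ∀ j, j < m → 0 < W j)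
    (vmax : ℝ) (hv : 0 < vmax) (tS tD : ℝ)
    (j : ℕ) (hj : j ≤ m) (tlo tbar : ℕ → ℝ)
    (hlo : ∀ i, tlo i = tS + ∑ k ∈ Finset.range i, W k / vmax)
    (hbar0 : tbar 0 = tS)
    (hbar : ∀ i, 1 ≤ i → tbar i = tD - ∑ k ∈ Finset.Ico i m, W k / vmax)
    (v : ℕ → ℝ) (hvv : ∀ i, i < m → 0 < v i ∧ v i ≤ vmax)
    (hD : tS + ∑ k ∈ Finset.range m, W k / v k ≤ tD) :
    tS + ∑ k ∈ Finset.range j, W k / v k ∈ Set.Icc (tlo j) (tbar j) := by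
  have hsplit : ∑ k ∈ Finset.range j, W k / v k + ∑ k ∈ Finset.Ico j m, W k / v k
      = ∑ k ∈ Finset.range m, W k / v k := by
    simp only [Finset.range_eq_Ico]
    exact Finset.sum_Ico_consecutive _ (Nat.zero_le _) hj
  have key : ∀ (s : Finset ℕ), (∀ i ∈ s, i < m) →
      ∑ k ∈ s, W k / vmax ≤ ∑ k ∈ s, W k / v k := by
    intro s hs
    apply Finset.sum_le_sum
    intro i hi
    exact div_le_div_of_nonneg_left (hW i (hs i hi)).le (hvv i (hs i hi)).1 (hvv i (hs i hi)).2
  constructor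
  · rw [hlo]
    have := key (Finset.range j) (fun i hi => lt_of_lt_of_le (Finset.mem_range.mp hi) hj)
    linarith
  · rcases Nat.eq_zero_or_pos j with h0 | h1
    · subst h0; simp [hbar0]
    · rw [hbar j h1]
      have := key (Finset.Ico j m) (fun i hi => (Finset.mem_Ico.mp hi).2)
      linarith

lemma truck_exists (m : ℕ) (W : ℕ → ℝ) (hW : ∀ j, j < m → 0 < W j)
    (vmax : ℝ) (hv : 0 < vmax) (tS tD : ℝ) (hSD : tS ≤ tD)
    (j : ℕ) (hj : j ≤ m) (tlo tbar : ℕ → ℝ)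
    (hlo : ∀ i, tlo i = tS + ∑ k ∈ Finset.range i, W k / vmax)
    (hbar0 : tbar 0 = tS)
    (hbar : ∀ i, 1 ≤ i → tbar i = tD - ∑ k ∈ Finset.Ico i m, W k / vmax)
    (hfeas : ∀ i, i ≤ m → tlo i ≤ tbar i)
    (t : ℝ) (ht : t ∈ Set.Icc (tlo j) (tbar j)) :
    ∃ v : ℕ → ℝ, (∀ i, i < m → 0 < v i ∧ v i ≤ vmax) ∧
      tS + ∑ k ∈ Finset.range j, W k / v k = t ∧
      tS + ∑ k ∈ Finset.range m, W k / v k ≤ tD := by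
  obtain ⟨ht1, ht2⟩ := ht
  rcases Nat.eq_zero_or_pos j with h0 | h1
  · subst h0
    refine ⟨fun _ => vmax, fun i _ => ⟨hv, le_refl _⟩, ?_, ?_⟩
    · rw [hbar0] at ht2
      rw [hlo 0] at ht1
      simp at ht1 ⊢
      linarith
    · rcases Nat.eq_zero_or_pos m with hm | hm
      · subst hm; simpa using hSD
      · have := hfeas m le_rfl
        rw [hlo m, hbar m hm] at this
        simp at this
        linarith [this]
  · set L : ℝ := ∑ k ∈ Finset.range j, W k / vmax with hL
    have hLpos : 0 < L := by
      apply Finset.sum_pos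
      · intro i hi
        exact div_pos (hW i (lt_of_lt_of_le (Finset.mem_range.mp hi) hj)) hv
      · exact ⟨0, Finset.mem_range.mpr h1⟩
    set T : ℝ := t - tS with hT
    have hLT : L ≤ T := by rw [hlo j] at ht1; simp only [hT, ← hL]; linarith
    have hTpos : 0 < T := lt_of_lt_of_le hLpos hLT
    have heq : ∑ k ∈ Finset.range j, W k / (if k < j then vmax * L / T else vmax) = T := by
      have : ∑ k ∈ Finset.range j, W k / (if k < j then vmax * L / T else vmax)
          = ∑ k ∈ Finset.range j, (W k / vmax) * (T / L) := by
        apply Finset.sum_congr rfl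
        intro i hi
        rw [if_pos (Finset.mem_range.mp hi)]
        field_simp
      rw [this, ← Finset.sum_mul, ← hL]
      field_simp
    refine ⟨fun i => if i < j then vmax * L / T else vmax, ?_, ?_, ?_⟩
    · intro i _
      by_cases h : i < j
      · simp only [if_pos h]
        refine ⟨div_pos (mul_pos hv hLpos) hTpos, ?_⟩
        rw [div_le_iff₀ hTpos]
        nlinarith
      · simp only [if_neg h]
        exact ⟨hv, le_refl _⟩
    · rw [heq]; simp [hT]
    · have hsplit : ∑ k ∈ Finset.range m, W k / (if k < j then vmax * L / T else vmax)
          = ∑ k ∈ Finset.range j, W k / (if k < j then vmax * L / T else vmax)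
            + ∑ k ∈ Finset.Ico j m, W k / vmax := by
        conv_lhs => rw [Finset.range_eq_Ico, ← Finset.sum_Ico_consecutive _ (Nat.zero_le j) hj]
        rw [← Finset.range_eq_Ico]
        congr 1
        apply Finset.sum_congr rfl
        intro i hi
        have := (Finset.mem_Ico.mp hi).1
        rw [if_neg (by omega)]
      rw [hsplit, heq]
      have hb := hbar j h1
      linarith [ht2, hb.symm.le]

/-- Theorem 1: two trucks can meet at a common node (truck 1 at node index `j1` of its
path, truck 2 at node index `j2` of its path) under the speed bound `v_max` and their
deadlines if and only if the intervals `[t̲₁[j1], t̄₁[j1]]` and `[t̲₂[j2], t̄₂[j2]]` of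
feasible arrival times intersect. Nodes of truck `k` are indexed `0, …, m_k`; the earliest
arrival times are computed forward and the latest arrival times backward at speed
`v_max`, with the latest arrival time at the start node equal to the start time. Each
truck is individually assumed able to meet its deadline. -/
theorem meet_iff_intervals_intersect (m1 m2 : ℕ) (W1 W2 : ℕ → ℝ)
    (hW1 : ∀ j, j < m1 → 0 < W1 j) (hW2 : ∀ j, j < m2 → 0 < W2 j)
    (vmax : ℝ) (hv : 0 < vmax)
    (tS1 tD1 tS2 tD2 : ℝ) (hSD1 : tS1 ≤ tD1) (hSD2 : tS2 ≤ tD2)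
    (j1 j2 : ℕ) (hj1 : j1 ≤ m1) (hj2 : j2 ≤ m2)
    (tlo1 tbar1 tlo2 tbar2 : ℕ → ℝ)
    (hlo1 : ∀ i, tlo1 i = tS1 + ∑ j ∈ Finset.range i, W1 j / vmax)
    (hlo2 : ∀ i, tlo2 i = tS2 + ∑ j ∈ Finset.range i, W2 j / vmax)
    (hbar1_0 : tbar1 0 = tS1) (hbar2_0 : tbar2 0 = tS2)
    (hbar1 : ∀ i, 1 ≤ i → tbar1 i = tD1 - ∑ j ∈ Finset.Ico i m1, W1 j / vmax)
    (hbar2 : ∀ i, 1 ≤ i → tbar2 i = tD2 - ∑ j ∈ Finset.Ico i m2, W2 j / vmax)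
    (hfeas1 : ∀ i, i ≤ m1 → tlo1 i ≤ tbar1 i)
    (hfeas2 : ∀ i, i ≤ m2 → tlo2 i ≤ tbar2 i) :
    (∃ v1 v2 : ℕ → ℝ,
        (∀ j, j < m1 → 0 < v1 j ∧ v1 j ≤ vmax) ∧
        (∀ j, j < m2 → 0 < v2 j ∧ v2 j ≤ vmax) ∧
        tS1 + ∑ j ∈ Finset.range j1, W1 j / v1 j
          = tS2 + ∑ j ∈ Finset.range j2, W2 j / v2 j ∧
        tS1 + ∑ j ∈ Finset.range m1, W1 j / v1 j ≤ tD1 ∧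
        tS2 + ∑ j ∈ Finset.range m2, W2 j / v2 j ≤ tD2) ↔
      (Set.Icc (tlo1 j1) (tbar1 j1) ∩ Set.Icc (tlo2 j2) (tbar2 j2)).Nonempty := by
  constructor
  · rintro ⟨v1, v2, hv1, hv2, heq, hd1, hd2⟩
    refine ⟨tS1 + ∑ j ∈ Finset.range j1, W1 j / v1 j, ?_, ?_⟩
    · exact truck_mem m1 W1 hW1 vmax hv tS1 tD1 j1 hj1 tlo1 tbar1 hlo1 hbar1_0 hbar1 v1 hv1 hd1
    · rw [heq]
      exact truck_mem m2 W2 hW2 vmax hv tS2 tD2 j2 hj2 tlo2 tbar2 hlo2 hbar2_0 hbar2 v2 hv2 hd2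
  · rintro ⟨t, ht1, ht2⟩
    obtain ⟨v1, hv1, he1, hd1⟩ := truck_exists m1 W1 hW1 vmax hv tS1 tD1 hSD1 j1 hj1
      tlo1 tbar1 hlo1 hbar1_0 hbar1 hfeas1 t ht1
    obtain ⟨v2, hv2, he2, hd2⟩ := truck_exists m2 W2 hW2 vmax hv tS2 tD2 hSD2 j2 hj2
      tlo2 tbar2 hlo2 hbar2_0 hbar2 hfeas2 t ht2
    exact ⟨v1, v2, hv1, hv2, by rw [he1, he2], hd1, hd2⟩
end

section
/- Suppose two trucks platoon (drive identically) on edges with index sets before j₁ and after j₂ of their common sub-path, but not on the edges strictly between, and let v₁, v₂ denote their per-edge speeds on the intermediate edges with ∑_m W[m]·v₁[m]² ≤ ∑_m W[m]·v₂[m]². Then replacing truck 2's speeds on the intermediate edges by truck 1's speeds (so they platoon throughout) does not increase the total objective ∑_k ∑_m W[m]·η(k,m)·v_k[m]², where η(k,m) = η < 1 if truck k is a platoon follower on edge m and 1 otherwise. -/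
open Finset

/-- Key inequality in the proof of Theorem 2: on the intermediate (non-platooned) common
edges, let `v1`, `v2` be the speed profiles of the two trucks, with
`∑ W m · v1 m² ≤ ∑ W m · v2 m²`. Truck 1 keeps its coefficients `c1`; truck 2's original
coefficients `c2 m` are each either `η` (it followed some other platoon) or `1`.
Replacing truck 2's speeds by truck 1's speeds and making truck 2 a follower (coefficient
`η` throughout) does not increase the total air-drag objective
`∑_k ∑_m W m · η(k,m) · v_k m²`. -/
theorem platoon_merge_does_not_increase_cost (M : ℕ)
    (W v1 v2 c1 c2 : Fin M → ℝ) (η : ℝ) (hη0 : 0 < η) (hη1 : η < 1)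
    (hW : ∀ m, 0 < W m)
    (hc2 : ∀ m, c2 m = η ∨ c2 m = 1)
    (hsum : ∑ m, W m * (v1 m) ^ 2 ≤ ∑ m, W m * (v2 m) ^ 2) :
    (∑ m, W m * c1 m * (v1 m) ^ 2) + ∑ m, W m * η * (v1 m) ^ 2 ≤
      (∑ m, W m * c1 m * (v1 m) ^ 2) + ∑ m, W m * c2 m * (v2 m) ^ 2 := by
  gcongr _ + ?_
  calc ∑ m, W m * η * (v1 m) ^ 2 = η * ∑ m, W m * (v1 m) ^ 2 := by
        rw [Finset.mul_sum]; apply Finset.sum_congr rfl; intros; ring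
    _ ≤ η * ∑ m, W m * (v2 m) ^ 2 := by
        exact mul_le_mul_of_nonneg_left hsum hη0.le
    _ = ∑ m, W m * η * (v2 m) ^ 2 := by
        rw [Finset.mul_sum]; apply Finset.sum_congr rfl; intros; ring
    _ ≤ ∑ m, W m * c2 m * (v2 m) ^ 2 := by
        apply Finset.sum_le_sum; intro m _
        have hc : η ≤ c2 m := by rcases hc2 m with h | h <;> rw [h]; exact hη1.le
        have := (hW m).le
        nlinarith [sq_nonneg (v2 m), mul_nonneg this (sq_nonneg (v2 m))]
end
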